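/- Suppose for every r > 0 and T > 0, P[sup_{u ∈ V_T(r)} Z_T(u) ≥ exp(−r^{2−ε_L})] ≤ C_L/r^L for constants C_L > 0 and ε_L ∈ (0,1), where V_T(r) = {u ∈ U_T : |u| ≥ r}. Assume the penalty satisfies: p(0)=0, p ≥ 0, p differentiable off 0, p bounded near 0, and the weights satisfy sup_T |α_T^j ξ_T^j| ≤ c₀ a.s. for all j with θ*_j ≠ 0. Then there exist C'_L > 0 and ε'_L ∈ (0,1) such that P[sup_{u ∈ V_T(r)} Z†_T(u) ≥ exp(−r^{2−ε'_L})] ≤ C'_L/r^L for all r > 0 and T > 0, where Z†_T(u) = Z_T(u)·exp(−∑_j ξ_T^j [p(θ*_j + (a_T u)_j) − p(θ*_j)]). -/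

import Mathlib

/-!
Since `p ≥ 0` vanishes at `0` and is differentiable at every nonzero `θ*_j`, the increment
`p (θ*_j + h) - p θ*_j` is at least `-B_j |h|`; together with `ξ_T^j |α_T^j| ≤ c₀` this gives
`Z†_T(u) ≤ Z_T(u) exp (K ‖u‖)` with `K` independent of `T`. The linear loss is absorbed by
peeling: on the shell `2ⁿ r ≤ ‖u‖ < 2ⁿ⁺¹ r` the inequality for `Z_T` yields the factor
`exp (-(2ⁿ r) ^ (2 - ε_L))`, which for `r` large beats `exp (2 K 2ⁿ r)` with room
`exp (-r ^ (2 - ε'))`, `ε' = (1 + ε_L) / 2`, and the probabilities `C_L / (2ⁿ r) ^ L` sum to a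
multiple of `C_L / r ^ L`. Small `r` are covered by enlarging the constant.

The bound `p ≤ M` on the bounded range of `θ* + a_T u` is needed only because `⨆` of an
unbounded real family is `0`: it keeps the supremum of `Z_T` genuine wherever that of `Z†_T` is.
-/

open MeasureTheory Set Filter

namespace Real

variable {E : Type*} {S : Set E} {f : E → ℝ}

theorem biSup_le {c : ℝ} (hc : 0 ≤ c) (h : ∀ u ∈ S, f u ≤ c) : ⨆ u ∈ S, f u ≤ c :=
  Real.iSup_le (fun u => Real.iSup_le (h u) hc) hc

theorem le_biSup (hf : BddAbove (f '' S)) {u : E} (hu : u ∈ S) : f u ≤ ⨆ v ∈ S, f v :=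
  le_ciSup₂ (f := fun v (_ : v ∈ S) => f v)
    (hf.mono fun _ hy => by simpa using hy) u hu

theorem biSup_of_not_bddAbove (hf : ¬BddAbove (f '' S)) : ⨆ u ∈ S, f u = 0 := by
  refine Real.iSup_of_not_bddAbove fun hbdd => hf ?_
  obtain ⟨b, hb⟩ := hbdd
  exact ⟨b, by rintro _ ⟨v, hv, rfl⟩; simpa [ciSup_pos hv] using hb ⟨v, rfl⟩⟩

end Real

theorem IsCompact.bddAbove_image_of_continuousAt_diff {X : Type*} [TopologicalSpace X]
    {p : X → ℝ} {K V : Set X} (hK : IsCompact K) (hV : IsOpen V) (hpV : BddAbove (p '' V))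
    (hp : ∀ x ∈ K \ V, ContinuousAt p x) : BddAbove (p '' K) :=
  (hpV.union ((hK.diff hV).bddAbove_image fun x hx => (hp x hx).continuousWithinAt)).mono <| by
    rw [← image_union]; exact image_mono fun x hx => by by_cases h : x ∈ V <;> simp [*]

theorem DifferentiableAt.exists_neg_mul_abs_le_sub {p : ℝ → ℝ} (hp : ∀ y, 0 ≤ p y) {x : ℝ}
    (hx : DifferentiableAt ℝ p x) : ∃ B ≥ 0, ∀ h, -(B * |h|) ≤ p (x + h) - p x := by
  obtain ⟨c, hc⟩ := hx.isBigO_sub.bound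
  obtain ⟨δ, hδ, hlip⟩ := Metric.eventually_nhds_iff.1 hc
  have hpx : 0 ≤ p x / δ := div_nonneg (hp x) hδ.le
  refine ⟨max c 0 + p x / δ, by positivity, fun h => ?_⟩
  rcases lt_or_ge |h| δ with hh | hh
  · have := hlip (y := x + h) (by simpa [Real.dist_eq] using hh)
    simp only [Real.norm_eq_abs, add_sub_cancel_left] at this
    nlinarith [neg_abs_le (p (x + h) - p x), le_max_left c 0, abs_nonneg h]
  · -- far from `x`, the increment is at least `-p x` because `p ≥ 0`
    have : p x ≤ p x / δ * |h| := by
      rw [div_mul_eq_mul_div, le_div_iff₀ hδ]; exact mul_le_mul_of_nonneg_left hh (hp x)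
    nlinarith [hp (x + h), le_max_right c 0, abs_nonneg h]

theorem exists_neg_mul_norm_le_sum_penalty {ι : Type*} [Fintype ι] {p : ℝ → ℝ}
    (hp : ∀ y, 0 ≤ p y) (hp0 : p 0 = 0) (hpdiff : ∀ x ≠ 0, DifferentiableAt ℝ p x)
    (θ : ι → ℝ) {c₀ : ℝ} (hc₀ : 0 ≤ c₀) :
    ∃ K ≥ 0, ∀ (w a : ι → ℝ) (u : EuclideanSpace ℝ ι), (∀ j, 0 ≤ w j) →
      (∀ j, θ j ≠ 0 → |a j * w j| ≤ c₀) →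
      -(K * ‖u‖) ≤ ∑ j, w j * (p (θ j + a j * u j) - p (θ j)) := by
  have hB : ∀ j, ∃ B ≥ 0, θ j ≠ 0 → ∀ h, -(B * |h|) ≤ p (θ j + h) - p (θ j) := fun j => by
    by_cases hj : θ j = 0
    · exact ⟨0, le_rfl, fun h => (h hj).elim⟩
    · obtain ⟨B, hB0, hB⟩ := (hpdiff _ hj).exists_neg_mul_abs_le_sub hp
      exact ⟨B, hB0, fun _ => hB⟩
  choose B hB0 hB using hB
  refine ⟨c₀ * ∑ j, B j, mul_nonneg hc₀ (Finset.sum_nonneg fun j _ => hB0 j), fun w a u hw hwa => ?_⟩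
  rw [Finset.mul_sum, Finset.sum_mul, ← Finset.sum_neg_distrib]
  refine Finset.sum_le_sum fun j _ => ?_
  have huj : |u j| ≤ ‖u‖ := by simpa using PiLp.norm_apply_le u j
  by_cases hj : θ j = 0
  · have : 0 ≤ w j * (p (θ j + a j * u j) - p (θ j)) := by
      rw [hj, hp0, zero_add, sub_zero]; exact mul_nonneg (hw j) (hp _)
    linarith [mul_nonneg (mul_nonneg hc₀ (hB0 j)) (norm_nonneg u)]
  · calc -(c₀ * B j * ‖u‖) ≤ -(B j * (|a j * w j| * |u j|)) := by
          have := mul_le_mul (hwa j hj) huj (abs_nonneg _) hc₀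
          nlinarith [hB0 j]
      _ = w j * -(B j * |a j * u j|) := by
          rw [abs_mul, abs_mul, abs_of_nonneg (hw j)]; ring
      _ ≤ w j * (p (θ j + a j * u j) - p (θ j)) :=
          mul_le_mul_of_nonneg_left (hB j hj _) (hw j)

theorem exists_rpow_dyadic_margin {β γ K : ℝ} (hβ : 1 < β) (hγ : γ < β) (hK : 0 ≤ K) :
    ∃ r₀ > 0, ∀ r ≥ r₀, ∀ n : ℕ, ∀ s ≤ 2 ^ (n + 1) * r,
      -(2 ^ n * r) ^ β + K * s ≤ -r ^ γ - 1 := by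
  set m := max γ 1
  obtain ⟨r₁, hr₁⟩ := eventually_atTop.1
    ((tendsto_rpow_atTop (sub_pos.2 (max_lt hγ hβ))).eventually_ge_atTop (2 * K + 2))
  refine ⟨max r₁ 1, by positivity, fun r hr n s hs => ?_⟩
  have hr1 : 1 ≤ r := le_of_max_le_right hr
  have hr0 : 0 < r := by linarith
  -- every lower-order term is at most `r ^ m`, and `r ^ β` beats `(2 K + 2) r ^ m`
  have hγm : r ^ γ ≤ r ^ m := Real.rpow_le_rpow_of_exponent_le hr1 (le_max_left _ _)
  have h1m : r ≤ r ^ m := by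
    simpa using Real.rpow_le_rpow_of_exponent_le hr1 (le_max_right γ 1)
  have hm1 : 1 ≤ r ^ m := Real.one_le_rpow hr1 (by positivity)
  have hβm : (2 * K + 2) * r ^ m ≤ r ^ β := by
    rw [show r ^ β = r ^ (β - m) * r ^ m by rw [← Real.rpow_add hr0]; ring_nf]
    exact mul_le_mul_of_nonneg_right (hr₁ r (le_of_max_le_left hr)) (by positivity)
  have ht : (1 : ℝ) ≤ 2 ^ n := one_le_pow₀ one_le_two
  have htβ : 2 ^ n * r ^ β ≤ (2 ^ n * r) ^ β := by
    rw [Real.mul_rpow (by positivity) hr0.le]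
    refine mul_le_mul_of_nonneg_right ?_ (by positivity)
    simpa using Real.rpow_le_rpow_of_exponent_le ht hβ.le
  have hKs : K * s ≤ 2 * K * (2 ^ n * r ^ m) :=
    calc K * s ≤ K * (2 ^ (n + 1) * r) := mul_le_mul_of_nonneg_left hs hK
      _ = 2 * K * (2 ^ n * r) := by ring
      _ ≤ 2 * K * (2 ^ n * r ^ m) := by gcongr
  have hβn : 2 ^ n * ((2 * K + 2) * r ^ m) ≤ 2 ^ n * r ^ β := by gcongr
  have hmn : r ^ m ≤ 2 ^ n * r ^ m := le_mul_of_one_le_left (by positivity) ht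
  linarith

theorem tsum_ofReal_div_two_pow_mul_rpow {C r L : ℝ} (hC : 0 ≤ C) (hr : 0 < r) (hL : 0 < L) :
    ∑' n : ℕ, ENNReal.ofReal (C / (2 ^ n * r) ^ L) =
      ENNReal.ofReal (C * (1 - (2 ^ L)⁻¹)⁻¹ / r ^ L) := by
  have hq : ((2 : ℝ) ^ L)⁻¹ < 1 := inv_lt_one_of_one_lt₀ (Real.one_lt_rpow one_lt_two hL)
  have hterm : ∀ n : ℕ, C / (2 ^ n * r) ^ L = C / r ^ L * ((2 : ℝ) ^ L)⁻¹ ^ n := fun n => by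
    rw [Real.mul_rpow (by positivity) hr.le, ← Real.rpow_pow_comm zero_le_two, inv_pow]
    field_simp
  have hsum := (hasSum_geometric_of_lt_one (by positivity) hq).mul_left (C / r ^ L)
  simp_rw [← hterm] at hsum
  rw [← ENNReal.ofReal_tsum_of_nonneg (fun n => by positivity) hsum.summable, hsum.tsum_eq]
  ring_nf

section Peeling

variable {E : Type*} [Norm E] {U : Set E}

theorem biSup_le_exp_of_dyadic {f g : E → ℝ} {K β b r : ℝ} (hr : 0 < r)
    (hgf : ∀ u ∈ U, g u ≤ f u * Real.exp (K * ‖u‖))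
    (hfg : ∃ c ≥ 0, ∀ u ∈ U, f u ≤ c * g u)
    (hf : ∀ n : ℕ, ⨆ u ∈ {u ∈ U | 2 ^ n * r ≤ ‖u‖}, f u < Real.exp (-(2 ^ n * r) ^ β))
    (hpeel : ∀ n : ℕ, ∀ s ≤ 2 ^ (n + 1) * r, -(2 ^ n * r) ^ β + K * s ≤ b) :
    ⨆ u ∈ {u ∈ U | r ≤ ‖u‖}, g u ≤ Real.exp b := by
  by_cases hg : BddAbove (g '' {u ∈ U | r ≤ ‖u‖})
  swap
  · rw [Real.biSup_of_not_bddAbove hg]; exact (Real.exp_pos b).le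
  obtain ⟨W, hW⟩ := hg
  obtain ⟨c, hc, hfg⟩ := hfg
  refine Real.biSup_le (Real.exp_pos b).le fun u hu => ?_
  obtain ⟨n, hn, hn'⟩ := exists_nat_pow_near ((one_le_div hr).2 hu.2) one_lt_two
  rw [le_div_iff₀ hr] at hn
  rw [div_lt_iff₀ hr] at hn'
  -- `g` bounded on the tail forces `f` to be bounded there, so its supremum is a genuine one
  have hfbdd : BddAbove (f '' {u ∈ U | 2 ^ n * r ≤ ‖u‖}) := by
    refine ⟨c * W, ?_⟩
    rintro _ ⟨v, hv, rfl⟩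
    have hvr : r ≤ ‖v‖ := le_trans (le_mul_of_one_le_left hr.le (one_le_pow₀ one_le_two)) hv.2
    exact (hfg v hv.1).trans (mul_le_mul_of_nonneg_left (hW ⟨v, ⟨hv.1, hvr⟩, rfl⟩) hc)
  have hfu : f u < Real.exp (-(2 ^ n * r) ^ β) :=
    (Real.le_biSup hfbdd ⟨hu.1, hn⟩).trans_lt (hf n)
  calc g u ≤ f u * Real.exp (K * ‖u‖) := hgf u hu.1
    _ ≤ Real.exp (-(2 ^ n * r) ^ β) * Real.exp (K * ‖u‖) :=
        mul_le_mul_of_nonneg_right hfu.le (Real.exp_pos _).le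
    _ ≤ Real.exp b := by rw [← Real.exp_add]; exact Real.exp_le_exp.2 (hpeel n _ hn'.le)

theorem measure_biSup_ge_le_of_dyadic {Ω : Type*} [MeasurableSpace Ω] {P : Measure Ω}
    {Z Zd : Ω → E → ℝ} {K β a b r C L : ℝ} (hr : 0 < r) (hL : 0 < L) (hC : 0 ≤ C)
    (hab : b < a)
    (hgf : ∀ᵐ ω ∂P, ∀ u ∈ U, Zd ω u ≤ Z ω u * Real.exp (K * ‖u‖))
    (hfg : ∀ ω, ∃ c ≥ 0, ∀ u ∈ U, Z ω u ≤ c * Zd ω u)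
    (hZ : ∀ n : ℕ, P {ω | Real.exp (-(2 ^ n * r) ^ β) ≤ ⨆ u ∈ {u ∈ U | 2 ^ n * r ≤ ‖u‖}, Z ω u}
      ≤ ENNReal.ofReal (C / (2 ^ n * r) ^ L))
    (hpeel : ∀ n : ℕ, ∀ s ≤ 2 ^ (n + 1) * r, -(2 ^ n * r) ^ β + K * s ≤ b) :
    P {ω | Real.exp a ≤ ⨆ u ∈ {u ∈ U | r ≤ ‖u‖}, Zd ω u}
      ≤ ENNReal.ofReal (C * (1 - (2 ^ L)⁻¹)⁻¹ / r ^ L) := by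
  have hsub : {ω | Real.exp a ≤ ⨆ u ∈ {u ∈ U | r ≤ ‖u‖}, Zd ω u} ≤ᵐ[P]
      ⋃ n : ℕ, {ω | Real.exp (-(2 ^ n * r) ^ β) ≤ ⨆ u ∈ {u ∈ U | 2 ^ n * r ≤ ‖u‖}, Z ω u} := by
    filter_upwards [hgf] with ω hω (hωa : Real.exp a ≤ _)
    refine mem_iUnion.2 (not_forall_not.1 fun hω' => ?_)
    exact (Real.exp_lt_exp.2 hab).not_ge <| hωa.trans <|
      biSup_le_exp_of_dyadic hr hω (hfg ω) (fun n => not_le.1 (hω' n)) hpeel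
  calc _ ≤ _ := measure_mono_ae hsub
    _ ≤ _ := measure_iUnion_le _
    _ ≤ _ := ENNReal.tsum_le_tsum hZ
    _ = _ := tsum_ofReal_div_two_pow_mul_rpow hC hr hL

end Peeling

theorem Bornology.IsBounded.exists_forall_apply_le {ι : Type*} [Fintype ι]
    {s : Set (EuclideanSpace ℝ ι)} (hs : Bornology.IsBounded s) {p : ℝ → ℝ}
    (hp : ∀ R, BddAbove (p '' Icc (-R) R)) : ∃ M, ∀ x ∈ s, ∀ j, p (x j) ≤ M := by
  obtain ⟨R, hR⟩ := hs.exists_norm_le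
  obtain ⟨M, hM⟩ := hp R
  refine ⟨M, fun x hx j => hM ⟨x j, abs_le.1 ?_, rfl⟩⟩
  simpa using (PiLp.norm_apply_le x j).trans (hR x hx)

theorem exists_pldi_of_le_mul_exp_norm {τ Ω E : Type*} [MeasurableSpace Ω] {P : Measure Ω}
    [IsProbabilityMeasure P] [Norm E] {U : τ → Set E} {Z Zd : τ → Ω → E → ℝ} {K L C εL : ℝ}
    (hK : 0 ≤ K) (hL : 0 < L) (hC : 0 ≤ C) (hεL : εL ∈ Ioo (0 : ℝ) 1)
    (hgf : ∀ T, ∀ᵐ ω ∂P, ∀ u ∈ U T, Zd T ω u ≤ Z T ω u * Real.exp (K * ‖u‖))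
    (hfg : ∀ T ω, ∃ c ≥ 0, ∀ u ∈ U T, Z T ω u ≤ c * Zd T ω u)
    (hZ : ∀ r > (0 : ℝ), ∀ T,
      P {ω | Real.exp (-(r ^ (2 - εL))) ≤ ⨆ u ∈ {u ∈ U T | r ≤ ‖u‖}, Z T ω u}
        ≤ ENNReal.ofReal (C / r ^ L)) :
    ∃ C' > (0 : ℝ), ∃ ε' ∈ Ioo (0 : ℝ) 1, ∀ r > (0 : ℝ), ∀ T,
      P {ω | Real.exp (-(r ^ (2 - ε'))) ≤ ⨆ u ∈ {u ∈ U T | r ≤ ‖u‖}, Zd T ω u}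
        ≤ ENNReal.ofReal (C' / r ^ L) := by
  obtain ⟨hεL0, hεL1⟩ := hεL
  obtain ⟨r₀, hr₀, hpeel⟩ := exists_rpow_dyadic_margin (β := 2 - εL) (γ := 2 - (1 + εL) / 2)
    (by linarith) (by linarith) hK
  refine ⟨max (r₀ ^ L) (C * (1 - (2 ^ L)⁻¹)⁻¹), lt_max_of_lt_left (by positivity),
    (1 + εL) / 2, ⟨by linarith, by linarith⟩, fun r hr T => ?_⟩
  rcases lt_or_ge r r₀ with hrr₀ | hrr₀
  · refine prob_le_one.trans (ENNReal.one_le_ofReal.2 ((one_le_div (by positivity)).2 ?_))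
    exact (Real.rpow_le_rpow hr.le hrr₀.le hL.le).trans (le_max_left _ _)
  · refine (measure_biSup_ge_le_of_dyadic hr hL hC (sub_one_lt _) (hgf T) (hfg T)
      (fun n => hZ _ (by positivity) T) (hpeel r hrr₀)).trans ?_
    exact ENNReal.ofReal_le_ofReal (by gcongr; exact le_max_right _ _)

theorem pldi_penalized_general
    {Ω : Type*} [MeasurableSpace Ω] (P : Measure Ω) [IsProbabilityMeasure P]
    (d : ℕ) (Θ : Set (EuclideanSpace ℝ (Fin d)))
    (hΘb : Bornology.IsBounded Θ)
    (θs : EuclideanSpace ℝ (Fin d))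
    (α : ℝ → Fin d → ℝ)
    (H : ℝ → Ω → EuclideanSpace ℝ (Fin d) → ℝ)
    (U : ℝ → Set (EuclideanSpace ℝ (Fin d)))
    (hU : ∀ T, U T = {u | (WithLp.toLp 2 (fun j => θs j + α T j * u j) : EuclideanSpace ℝ (Fin d)) ∈ closure Θ})
    (Z : ℝ → Ω → EuclideanSpace ℝ (Fin d) → ℝ)
    (hZ : ∀ T ω u, Z T ω u =
      Real.exp (H T ω (WithLp.toLp 2 (fun j => θs j + α T j * u j)) - H T ω θs))
    (L C_L εL : ℝ) (hL : 0 < L) (hCL : 0 < C_L) (hεL : εL ∈ Ioo (0 : ℝ) 1)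
    (hPLDI : ∀ r > (0 : ℝ), ∀ T > (0 : ℝ),
      P {ω | Real.exp (-(r ^ (2 - εL))) ≤ ⨆ u ∈ {u ∈ U T | r ≤ ‖u‖}, Z T ω u}
        ≤ ENNReal.ofReal (C_L / r ^ L))
    (p : ℝ → ℝ) (hp0 : p 0 = 0) (hpnn : ∀ x, 0 ≤ p x)
    (hpdiff : ∀ x : ℝ, x ≠ 0 → DifferentiableAt ℝ p x)
    (hpbd : ∃ ε > (0 : ℝ), BddAbove (p '' Ioo (-ε) ε))
    (ξ : ℝ → Ω → Fin d → ℝ) (hξpos : ∀ T ω j, 0 < ξ T ω j)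
    (c₀ : ℝ) (hc₀ : 0 < c₀)
    (hA4 : ∀ j, θs j ≠ 0 → ∀ᵐ ω ∂P, ∀ T, |α T j * ξ T ω j| ≤ c₀)
    (Zd : ℝ → Ω → EuclideanSpace ℝ (Fin d) → ℝ)
    (hZd : ∀ T ω u, Zd T ω u = Z T ω u *
      Real.exp (-(∑ j, ξ T ω j * (p (θs j + α T j * u j) - p (θs j))))) :
    ∃ C'_L > (0 : ℝ), ∃ ε'L ∈ Ioo (0 : ℝ) 1, ∀ r > (0 : ℝ), ∀ T > (0 : ℝ),
      P {ω | Real.exp (-(r ^ (2 - ε'L))) ≤ ⨆ u ∈ {u ∈ U T | r ≤ ‖u‖}, Zd T ω u}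
        ≤ ENNReal.ofReal (C'_L / r ^ L) := by
  obtain ⟨ε, hε, hpε⟩ := hpbd
  obtain ⟨M, hM⟩ := hΘb.closure.exists_forall_apply_le fun R =>
    isCompact_Icc.bddAbove_image_of_continuousAt_diff isOpen_Ioo hpε fun x hx =>
      (hpdiff x fun h => hx.2 (h ▸ ⟨neg_lt_zero.2 hε, hε⟩)).continuousAt
  obtain ⟨K, hK0, hK⟩ := exists_neg_mul_norm_le_sum_penalty hpnn hp0 hpdiff θs hc₀.le
  have hZpos : ∀ T ω u, 0 < Z T ω u := fun T ω u => hZ T ω u ▸ Real.exp_pos _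
  have hgood : ∀ᵐ ω ∂P, ∀ j, θs j ≠ 0 → ∀ T, |α T j * ξ T ω j| ≤ c₀ :=
    ae_all_iff.2 fun j => eventually_imp_distrib_left.2 (hA4 j)
  have hlower (T : ℝ) : ∀ᵐ ω ∂P, ∀ u ∈ U T, Zd T ω u ≤ Z T ω u * Real.exp (K * ‖u‖) :=
    hgood.mono fun ω hω u _ => (hZd T ω u).trans_le <| mul_le_mul_of_nonneg_left
      (Real.exp_le_exp.2 <| neg_le.1 <| hK _ _ u (fun j => (hξpos T ω j).le) fun j hj => hω j hj T)
      (hZpos T ω u).le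
  have hupper (T : ℝ) (ω : Ω) : ∃ c ≥ 0, ∀ u ∈ U T, Z T ω u ≤ c * Zd T ω u := by
    refine ⟨Real.exp ((∑ j, ξ T ω j) * M), (Real.exp_pos _).le, fun u hu => ?_⟩
    rw [hU T] at hu
    have hpen : ∑ j, ξ T ω j * (p (θs j + α T j * u j) - p (θs j)) ≤ (∑ j, ξ T ω j) * M := by
      rw [Finset.sum_mul]
      refine Finset.sum_le_sum fun j _ => mul_le_mul_of_nonneg_left ?_ (hξpos T ω j).le
      linarith [hM _ hu j, hpnn (θs j)]
    rw [hZd, mul_left_comm, ← Real.exp_add]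
    exact le_mul_of_one_le_right (hZpos T ω u).le (Real.one_le_exp (by linarith))
  obtain ⟨C', hC', ε', hε', hZd'⟩ := exists_pldi_of_le_mul_exp_norm (τ := Ioi (0 : ℝ)) hK0 hL
    hCL.le hεL (fun T => hlower T) (fun T => hupper T) fun r hr T => hPLDI r hr T T.2
  exact ⟨C', hC', ε', hε', fun r hr T hT => hZd' r hr ⟨T, hT⟩⟩

/-- Theorem 1: the penalty does not disturb the polynomial type large deviation inequality.
`Θ ⊂ ℝ^p` bounded open, `θ*` the true value, `a_T` the diagonal rate matrix with entries
`α T j`, `U_T = {u : θ* + a_T u ∈ cl Θ}`, `V_T(r) = {u ∈ U_T : |u| ≥ r}`,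
`Z_T(u) = exp(H_T(θ*+a_T u) − H_T(θ*))` and
`Z†_T(u) = Z_T(u)·exp(−∑_j ξ_T^j [p(θ*_j + (a_T u)_j) − p(θ*_j)])`. -/
theorem pldi_penalized
    {Ω : Type*} [MeasurableSpace Ω] (P : Measure Ω) [IsProbabilityMeasure P]
    (d : ℕ) (Θ : Set (EuclideanSpace ℝ (Fin d))) (hΘo : IsOpen Θ)
    (hΘb : Bornology.IsBounded Θ)
    (θs : EuclideanSpace ℝ (Fin d)) (hθs : θs ∈ Θ)
    (α : ℝ → Fin d → ℝ) (hα : ∀ T j, α T j ≠ 0)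
    (H : ℝ → Ω → EuclideanSpace ℝ (Fin d) → ℝ)
    (U : ℝ → Set (EuclideanSpace ℝ (Fin d)))
    (hU : ∀ T, U T = {u | (WithLp.toLp 2 (fun j => θs j + α T j * u j) : EuclideanSpace ℝ (Fin d)) ∈ closure Θ})
    (Z : ℝ → Ω → EuclideanSpace ℝ (Fin d) → ℝ)
    (hZ : ∀ T ω u, Z T ω u =
      Real.exp (H T ω (WithLp.toLp 2 (fun j => θs j + α T j * u j)) - H T ω θs))
    (L C_L εL : ℝ) (hL : 0 < L) (hCL : 0 < C_L) (hεL : εL ∈ Ioo (0 : ℝ) 1)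
    (hPLDI : ∀ r > (0 : ℝ), ∀ T > (0 : ℝ),
      P {ω | Real.exp (-(r ^ (2 - εL))) ≤ ⨆ u ∈ {u ∈ U T | r ≤ ‖u‖}, Z T ω u}
        ≤ ENNReal.ofReal (C_L / r ^ L))
    (p : ℝ → ℝ) (hp0 : p 0 = 0) (hpnn : ∀ x, 0 ≤ p x)
    (hpdiff : ∀ x : ℝ, x ≠ 0 → DifferentiableAt ℝ p x)
    (hpbd : ∃ ε > (0 : ℝ), BddAbove (p '' Ioo (-ε) ε))
    (ξ : ℝ → Ω → Fin d → ℝ) (hξpos : ∀ T ω j, 0 < ξ T ω j)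
    (c₀ : ℝ) (hc₀ : 0 < c₀)
    (hA4 : ∀ j, θs j ≠ 0 → ∀ᵐ ω ∂P, ∀ T, |α T j * ξ T ω j| ≤ c₀)
    (Zd : ℝ → Ω → EuclideanSpace ℝ (Fin d) → ℝ)
    (hZd : ∀ T ω u, Zd T ω u = Z T ω u *
      Real.exp (-(∑ j, ξ T ω j * (p (θs j + α T j * u j) - p (θs j))))) :
    ∃ C'_L > (0 : ℝ), ∃ ε'L ∈ Ioo (0 : ℝ) 1, ∀ r > (0 : ℝ), ∀ T > (0 : ℝ),
      P {ω | Real.exp (-(r ^ (2 - ε'L))) ≤ ⨆ u ∈ {u ∈ U T | r ≤ ‖u‖}, Zd T ω u}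
        ≤ ENNReal.ofReal (C'_L / r ^ L) :=
  pldi_penalized_general P d Θ hΘb θs α H U hU Z hZ L C_L εL hL hCL hεL hPLDI p hp0 hpnn hpdiff hpbd
    ξ hξpos c₀ hc₀ hA4 Zd hZd
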